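/- Let (a_k) be a sequence of affine maps a_k : ℝ^n → ℝ^n with a_k(x) = A_k x + b_k, where each A_k is skew-symmetric and b_k ∈ ℝ^n. Then there exists a subsequence such that either the subsequence converges uniformly on compact sets to an affine map with skew-symmetric linear part, or there exists an affine subspace Π ⊆ ℝ^n of dimension at most n−2 such that |a_k(x)| → +∞ for every x ∈ ℝ^n \ Π along the subsequence. -/

import Mathlib

/-!
Encode the motion `x ↦ A x + b` by its parameter `(A, b)`, a point of a finite-dimensional
normed space. If a subsequence of parameters is bounded, it has a convergent subsequence, and
convergence of the parameters gives uniform convergence of the maps on compact sets. Otherwise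
a subsequence has `‖(A_k, b_k)‖ → ∞` and normalized parameters converging to some `(A, b) ≠ 0`
with `A` skew-symmetric; then `|A_k x + b_k| ≈ ‖(A_k, b_k)‖ |A x + b| → ∞` unless `A x + b = 0`.
That zero set is empty or a translate of `ker A`, and `dim ker A ≤ n - 2` because a nonzero
skew-symmetric matrix has rank at least two.
-/

open scoped Matrix
open Filter Topology

theorem exists_subseq_tendsto_or_tendsto_norm_smul {V : Type*} [NormedAddCommGroup V]
    [NormedSpace ℝ V] [ProperSpace V] (c : ℕ → V) :
    ∃ φ : ℕ → ℕ, StrictMono φ ∧ ((∃ v, Tendsto (c ∘ φ) atTop (𝓝 v)) ∨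
      (Tendsto (fun k => ‖c (φ k)‖) atTop atTop ∧
        ∃ w ≠ 0, Tendsto (fun k => ‖c (φ k)‖⁻¹ • c (φ k)) atTop (𝓝 w))) := by
  by_cases hbdd : ∃ C, ∃ᶠ k in atTop, ‖c k‖ ≤ C
  · obtain ⟨C, hC⟩ := hbdd
    obtain ⟨v, -, φ, hφ, hv⟩ := tendsto_subseq_of_frequently_bounded
      (x := c) (Metric.isBounded_closedBall (x := 0) (r := C)) (by simpa using hC)
    exact ⟨φ, hφ, .inl ⟨v, hv⟩⟩
  · push Not at hbdd
    have hc : Tendsto (fun k => ‖c k‖) atTop atTop :=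
      tendsto_atTop.2 fun C => (hbdd C).mono fun _ => le_of_lt
    have hsphere : ∃ᶠ k in atTop, ‖c k‖⁻¹ • c k ∈ Metric.sphere (0 : V) 1 :=
      ((hc.eventually_gt_atTop 0).mono fun k hk => by
        simp [norm_smul, inv_mul_cancel₀ hk.ne']).frequently
    obtain ⟨w, hw, φ, hφ, hlim⟩ := (isCompact_sphere (0 : V) 1).tendsto_subseq' hsphere
    exact ⟨φ, hφ, .inr ⟨hc.comp hφ.tendsto_atTop, w,
      ne_zero_of_mem_sphere one_ne_zero ⟨w, hw⟩, hlim⟩⟩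

theorem tendsto_norm_map_atTop_of_tendsto_norm_smul {V W ι : Type*} [NormedAddCommGroup V]
    [NormedSpace ℝ V] [FiniteDimensional ℝ V] [NormedAddCommGroup W] [NormedSpace ℝ W]
    (L : V →ₗ[ℝ] W) {l : Filter ι} {c : ι → V} {w : V}
    (hc : Tendsto (fun i => ‖c i‖) l atTop) (hw : Tendsto (fun i => ‖c i‖⁻¹ • c i) l (𝓝 w))
    (hLw : L w ≠ 0) : Tendsto (fun i => ‖L (c i)‖) l atTop := by
  have hLc : Tendsto (fun i => ‖L (‖c i‖⁻¹ • c i)‖) l (𝓝 ‖L w‖) :=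
    ((L.continuous_of_finiteDimensional.tendsto w).comp hw).norm
  refine (hc.atTop_mul_pos (norm_pos_iff.2 hLw) hLc).congr' ?_
  filter_upwards [hc.eventually_gt_atTop 0] with i hi
  rw [map_smul, norm_smul, norm_inv, norm_norm, mul_inv_cancel_left₀ hi.ne']

theorem tendstoUniformlyOn_of_continuous_uncurry {α β γ ι : Type*} [TopologicalSpace α]
    [TopologicalSpace β] [UniformSpace γ] {F : α → β → γ} (hF : Continuous ↿F) {l : Filter ι}
    {u : ι → α} {a : α} (hu : Tendsto u l (𝓝 a)) {K : Set β} (hK : IsCompact K) :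
    TendstoUniformlyOn (fun i => F (u i)) (F a) l K :=
  ContinuousMap.tendsto_iff_forall_isCompact_tendstoUniformlyOn.1
    (((ContinuousMap.curry ⟨↿F, hF⟩).continuous.tendsto a).comp hu) K hK

namespace Matrix

theorem transpose_eq_neg_of_tendsto {m R α : Type*} [TopologicalSpace R] [T2Space R] [AddGroup R]
    [ContinuousNeg R] {l : Filter α} [l.NeBot] {M : α → Matrix m m R} {A : Matrix m m R}
    (hM : Tendsto M l (𝓝 A)) (hskew : ∀ᶠ i in l, (M i)ᵀ = -M i) : Aᵀ = -A :=
  (isClosed_eq continuous_id.matrix_transpose continuous_neg).mem_of_tendsto hM hskew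

def affineEvalₗ {m n R : Type*} [Fintype n] [CommRing R] (x : n → R) :
    Matrix m n R × (m → R) →ₗ[R] m → R where
  toFun p := p.1 *ᵥ x + p.2
  map_add' p q := by simp only [Prod.fst_add, Prod.snd_add, add_mulVec]; abel
  map_smul' t p := by simp [smul_mulVec, smul_add]

variable {ι R : Type*} [Fintype ι]

theorem dotProduct_mulVec_of_transpose_eq_neg [CommRing R] {A : Matrix ι ι R} (hA : Aᵀ = -A)
    (x y : ι → R) : x ⬝ᵥ (A *ᵥ y) = -((A *ᵥ x) ⬝ᵥ y) := by
  rw [dotProduct_mulVec, ← mulVec_transpose, hA, neg_mulVec, neg_dotProduct]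

variable [Field R] [LinearOrder R] [IsStrictOrderedRing R]

theorem dotProduct_mulVec_self_of_transpose_eq_neg {A : Matrix ι ι R} (hA : Aᵀ = -A)
    (x : ι → R) : x ⬝ᵥ (A *ᵥ x) = 0 := by
  have h := dotProduct_mulVec_of_transpose_eq_neg hA x x
  rw [dotProduct_comm (A *ᵥ x)] at h
  linarith

/-- For `u = A x ≠ 0`, the vectors `u` and `A u` of the range are independent, because
`x ⬝ᵥ u = 0` while `x ⬝ᵥ A u = -(u ⬝ᵥ u) ≠ 0`. -/
theorem two_le_rank_of_transpose_eq_neg {A : Matrix ι ι R} (hA : Aᵀ = -A) (h0 : A ≠ 0) :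
    2 ≤ A.rank := by
  obtain ⟨x, hx⟩ : ∃ x, A *ᵥ x ≠ 0 := by
    classical
    by_contra! h
    exact h0 (ext_of_mulVec_single fun j => by rw [h, zero_mulVec])
  set u := A *ᵥ x
  have hxu : x ⬝ᵥ u = 0 := dotProduct_mulVec_self_of_transpose_eq_neg hA x
  have hxAu : x ⬝ᵥ (A *ᵥ u) = -(u ⬝ᵥ u) := dotProduct_mulVec_of_transpose_eq_neg hA x u
  have hindep : LinearIndependent R ![u, A *ᵥ u] := by
    refine LinearIndependent.pair_iff.2 fun s t hst => ?_
    have ht : t = 0 := by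
      have := congrArg (x ⬝ᵥ ·) hst
      simp only [dotProduct_add, dotProduct_smul, hxu, hxAu, dotProduct_zero, smul_eq_mul] at this
      simpa [dotProduct_self_eq_zero, hx] using this
    subst ht
    simpa [hx] using hst
  have hspan : Submodule.span R (Set.range ![u, A *ᵥ u]) ≤ LinearMap.range A.mulVecLin := by
    rw [Submodule.span_le, Set.range_subset_iff]
    intro i
    fin_cases i
    exacts [⟨x, rfl⟩, ⟨u, rfl⟩]
  show 2 ≤ Module.finrank R (LinearMap.range A.mulVecLin)
  simpa [finrank_span_eq_card hindep] using Submodule.finrank_mono hspan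

theorem exists_affineSubspace_finrank_le_of_transpose_eq_neg {A : Matrix ι ι R} (hA : Aᵀ = -A)
    {b : ι → R} (hAb : A ≠ 0 ∨ b ≠ 0) :
    ∃ P : AffineSubspace R (ι → R), Module.finrank R P.direction ≤ Fintype.card ι - 2 ∧
      ∀ x, A *ᵥ x + b = 0 → x ∈ P := by
  by_cases hzero : ∃ x₀, A *ᵥ x₀ + b = 0
  · obtain ⟨x₀, hx₀⟩ := hzero
    have h0 : A ≠ 0 := by
      rintro rfl
      simp_all
    refine ⟨AffineSubspace.mk' x₀ (LinearMap.ker A.mulVecLin), ?_, fun x hx => ?_⟩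
    · have hrank : 2 ≤ Module.finrank R (LinearMap.range A.mulVecLin) :=
        two_le_rank_of_transpose_eq_neg hA h0
      have hnullity := A.mulVecLin.finrank_range_add_finrank_ker
      rw [Module.finrank_fintype_fun_eq_card] at hnullity
      rw [AffineSubspace.direction_mk']
      omega
    · rw [AffineSubspace.mem_mk', LinearMap.mem_ker, mulVecLin_apply, vsub_eq_sub, mulVec_sub]
      linear_combination hx - hx₀
  · push Not at hzero
    refine ⟨⊥, ?_, fun x hx => absurd hx (hzero x)⟩
    rw [AffineSubspace.direction_bot, finrank_bot]
    exact Nat.zero_le _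

end Matrix

-- Any norm on the parameter space would do; this is the entrywise sup norm.
attribute [local instance] Matrix.normedAddCommGroup Matrix.normedSpace

/-- Compactness alternative for sequences of infinitesimal rigid motions:
either a subsequence converges uniformly on compact sets to an affine map with
skew-symmetric linear part, or a subsequence diverges off an affine subspace of
dimension at most `n - 2`. -/
theorem stmt0 (n : ℕ) (A : ℕ → Matrix (Fin n) (Fin n) ℝ) (b : ℕ → Fin n → ℝ)
    (hskew : ∀ k, (A k)ᵀ = -(A k)) :
    ∃ φ : ℕ → ℕ, StrictMono φ ∧
      ((∃ (A₀ : Matrix (Fin n) (Fin n) ℝ) (b₀ : Fin n → ℝ), A₀ᵀ = -A₀ ∧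
          ∀ K : Set (Fin n → ℝ), IsCompact K →
            TendstoUniformlyOn (fun k x => (A (φ k)).mulVec x + b (φ k))
              (fun x => A₀.mulVec x + b₀) atTop K) ∨
        (∃ P : AffineSubspace ℝ (Fin n → ℝ),
          Module.finrank ℝ P.direction ≤ n - 2 ∧
          ∀ x : Fin n → ℝ, x ∉ P →
            Tendsto (fun k => ‖(A (φ k)).mulVec x + b (φ k)‖) atTop atTop)) := by
  obtain ⟨φ, hφ, ⟨p, hp⟩ | ⟨hnorm, w, hw0, hw⟩⟩ :=
    exists_subseq_tendsto_or_tendsto_norm_smul fun k => (A k, b k)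
  · refine ⟨φ, hφ, .inl ⟨p.1, p.2, ?_, fun K hK => ?_⟩⟩
    · exact Matrix.transpose_eq_neg_of_tendsto ((continuous_fst.tendsto p).comp hp)
        (.of_forall fun k => hskew (φ k))
    · have hF : Continuous fun q : (Matrix (Fin n) (Fin n) ℝ × (Fin n → ℝ)) × (Fin n → ℝ) =>
          q.1.1 *ᵥ q.2 + q.1.2 :=
        (continuous_fst.fst.matrix_mulVec continuous_snd).add continuous_fst.snd
      exact tendstoUniformlyOn_of_continuous_uncurry (F := fun p x => p.1 *ᵥ x + p.2) hF hp hK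
  · have hwskew : w.1ᵀ = -w.1 :=
      Matrix.transpose_eq_neg_of_tendsto ((continuous_fst.tendsto w).comp hw)
        (.of_forall fun k => by simp [Matrix.transpose_smul, hskew])
    obtain ⟨P, hPdim, hP⟩ := Matrix.exists_affineSubspace_finrank_le_of_transpose_eq_neg hwskew
      (b := w.2) (by contrapose! hw0; exact Prod.ext hw0.1 hw0.2)
    refine ⟨φ, hφ, .inr ⟨P, by simpa using hPdim, fun x hx => ?_⟩⟩
    exact tendsto_norm_map_atTop_of_tendsto_norm_smul (Matrix.affineEvalₗ x) hnorm hw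
      fun h => hx (hP x h)
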